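/- Let A = Z/mZ. The vertices of the tripod polytope P_{0,3}(Z/mZ) ⊂ R^{3(m−1)} (in the coordinates x^{e}_{[i]} for e ∈ {e_1,e_2,e_3} and i ∈ {1,...,m−1}) are exactly: the zero vector; for each i ∈ {1,...,m−1}, the three vectors with x^{e_a}_{[i]} = x^{e_b}_{[m−i]} = 1 for each of the three pairs {a,b} ⊂ {1,2,3} and all other coordinates zero; and for each triple i,j,k ∈ {1,...,m−1} with i+j+k ≡ 0 (mod m), the vector with x^{e_1}_{[i]} = x^{e_2}_{[j]} = x^{e_3}_{[k]} = 1 and all other coordinates zero. In total there are m^2 vertices. -/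

import Mathlib

/-!
Every point of `S` is a `0/1`-vector, i.e. a vertex of the unit cube `[0,1]^{3(m-1)}`, and the
cube contains `S`; a vertex of a convex set is a fortiori extreme in any smaller convex set
containing it, so every point of `S` is extreme in `conv S`. The count comes from the fact that a
labeling is recovered from its point (the coordinates see every nonzero label), and a zero-sum
labeling is determined by its first two values.
-/

open Set

theorem extremePoints_convexHull_eq_self_of_subset_pi_zero_one {ι : Type*}
    {S : Set (ι → ℝ)} (hS : S ⊆ univ.pi fun _ => {0, 1}) :
    (convexHull ℝ S).extremePoints ℝ = S := by
  refine extremePoints_convexHull_subset.antisymm fun x hx => ?_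
  have hcube : convexHull ℝ S ⊆ univ.pi fun _ => Icc (0 : ℝ) 1 :=
    convexHull_min (hS.trans <| pi_mono fun _ _ => by simp [pair_subset_iff])
      (convex_pi fun _ _ => convex_Icc 0 1)
  refine inter_extremePoints_subset_extremePoints_of_subset hcube ⟨subset_convexHull ℝ S hx, ?_⟩
  rw [extremePoints_pi]
  simpa [extremePoints_Icc zero_le_one] using hS hx

theorem injective_labelIndicator {ι κ α R : Type*} [DecidableEq α] [Zero R] [One R] [NeZero (1 : R)]
    (label : κ → α) (a₀ : α) (hlabel : ∀ a ≠ a₀, ∃ k, label k = a) :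
    Function.Injective fun (f : ι → α) (p : ι × κ) => if f p.1 = label p.2 then (1 : R) else 0 := by
  intro f g h
  have hiff (e : ι) (k : κ) : f e = label k ↔ g e = label k := by
    have := congrFun h (e, k)
    dsimp only at this
    split_ifs at this <;> simp_all
  funext e
  by_cases hf : f e = a₀
  · by_cases hg : g e = a₀
    · rw [hf, hg]
    · obtain ⟨k, hk⟩ := hlabel _ hg
      exact ((hiff e k).2 hk.symm).trans hk
  · obtain ⟨k, hk⟩ := hlabel _ hf
    exact hk.symm.trans ((hiff e k).1 hk.symm).symm

theorem ZMod.exists_natCast_succ_eq (m : ℕ) [NeZero m] {c : ZMod m} (hc : c ≠ 0) :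
    ∃ i : Fin (m - 1), (((i : ℕ) + 1 : ℕ) : ZMod m) = c := by
  have hv : c.val ≠ 0 := (ZMod.val_ne_zero c).mpr hc
  refine ⟨⟨c.val - 1, by have := c.val_lt; omega⟩, ?_⟩
  simp [Nat.sub_add_cancel (Nat.one_le_iff_ne_zero.mpr hv)]

def zeroSumTriplesEquiv (G : Type*) [AddCommGroup G] :
    {f : Fin 3 → G // f 0 + f 1 + f 2 = 0} ≃ G × G where
  toFun f := (f.1 0, f.1 1)
  invFun p := ⟨![p.1, p.2, -(p.1 + p.2)], by simp⟩
  left_inv f := by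
    ext i
    fin_cases i
    · rfl
    · rfl
    · exact neg_eq_of_add_eq_zero_right (by simpa [add_assoc] using f.2)
  right_inv _ := rfl

theorem stmt7 (m : ℕ) (hm : 2 ≤ m) :
    let pt : (Fin 3 → ZMod m) → (Fin 3 × Fin (m - 1) → ℝ) :=
      fun f p => if f p.1 = (((p.2 : ℕ) + 1 : ℕ) : ZMod m) then 1 else 0
    let S : Set (Fin 3 × Fin (m - 1) → ℝ) :=
      {x | ∃ f : Fin 3 → ZMod m, f 0 + f 1 + f 2 = 0 ∧ x = pt f}
    Set.extremePoints ℝ (convexHull ℝ S) = S ∧ S.ncard = m ^ 2 := by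
  intro pt S
  have : NeZero m := ⟨by omega⟩
  have hpt : Function.Injective pt :=
    injective_labelIndicator _ 0 fun _ hc => ZMod.exists_natCast_succ_eq m hc
  have hS : S = pt '' {f | f 0 + f 1 + f 2 = 0} := by
    ext x
    simp only [S, mem_ofPred_eq, mem_image, eq_comm]
  refine ⟨extremePoints_convexHull_eq_self_of_subset_pi_zero_one ?_, ?_⟩
  · rintro _ ⟨f, -, rfl⟩ p -
    simp only [pt]
    split_ifs <;> simp
  · rw [hS, ncard_image_of_injective _ hpt, ← Nat.card_coe_set_eq]
    exact (Nat.card_congr (zeroSumTriplesEquiv (ZMod m))).trans (by simp [sq])
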